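/- For d ≥ 2 and n ≥ 1, let P_n = {(i_1/n, …, i_{d−1}/n, i_d/n²) : 0 ≤ i_j ≤ n−1 for 1 ≤ j ≤ d−1, 1 ≤ i_d ≤ n²} and let H = {(t_1,…,t_{d−1}, t_1² + ⋯ + t_{d−1}²) : t ∈ ℝ^{d−1}} be the standard paraboloid. Then |P_n| = n^{d+1}, and for every p ∈ P_n, the translated paraboloid H + p contains at least n^{d−1} points of the grid {(i_1/n, …, i_{d−1}/n, k/n²) : 0 ≤ i_j ≤ n−1, k ∈ ℤ}. Consequently, the total number of incidences between P_n and the family {H + p : p ∈ P_n} of N = n^{d+1} translated paraboloids and N points is at least N^{2 − 2/(d+1)}, up to constants. -/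

import Mathlib

open Set

/-- Valtr's point set `P_n` in `ℝ^d` with `d = e + 1`. -/
def valtrP (e n : ℕ) : Set (Fin (e+1) → ℝ) :=
  {x | ∃ i : Fin (e+1) → ℤ,
    (∀ j : Fin e, 0 ≤ i j.castSucc ∧ i j.castSucc ≤ (n:ℤ) - 1 ∧
      x j.castSucc = (i j.castSucc : ℝ) / n) ∧
    1 ≤ i (Fin.last e) ∧ i (Fin.last e) ≤ (n:ℤ)^2 ∧
    x (Fin.last e) = (i (Fin.last e) : ℝ) / (n:ℝ)^2}

/-- The grid `{(i_1/n, …, i_{d−1}/n, k/n²) : 0 ≤ i_j ≤ n−1, k ∈ ℤ}`. -/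
def valtrGrid (e n : ℕ) : Set (Fin (e+1) → ℝ) :=
  {x | ∃ i : Fin (e+1) → ℤ,
    (∀ j : Fin e, 0 ≤ i j.castSucc ∧ i j.castSucc ≤ (n:ℤ) - 1 ∧
      x j.castSucc = (i j.castSucc : ℝ) / n) ∧
    x (Fin.last e) = (i (Fin.last e) : ℝ) / (n:ℝ)^2}

/-- The standard paraboloid `H = {(t, |t|²) : t ∈ ℝ^{d−1}}`. -/
def parab (e : ℕ) : Set (Fin (e+1) → ℝ) :=
  {x | x (Fin.last e) = ∑ j : Fin e, (x j.castSucc)^2}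

/-!
Write `gridPoint n (a, b) = (a / n, b / n²)` for `a ∈ ℤ^e`, `b ∈ ℤ`. Clearing the denominator `n²`,
`gridPoint n (a, b)` lies on `H + gridPoint n (a', b')` iff `b = b' + ∑ⱼ (aⱼ - a'ⱼ)²`, so a translate
meets the grid in exactly one point above each `a ∈ [0, n)^e`. For the incidence count restrict
`a, a'` to the cube `[0, r]^e` with `r = ⌊(n - 1) / (2e + 1)⌋`: then `∑ⱼ (aⱼ - a'ⱼ)² ≤ e r² ≤ n² / 4`,
so each `b' ∈ [1, n² - e r²]` yields an incidence inside `P_n`, giving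
`(r + 1)^{2e} (n² - e r²) ≥ (n / (2e + 1))^{2e} · 3n² / 4` of them.
-/

noncomputable def gridPoint {e : ℕ} (n : ℕ) (ab : (Fin e → ℤ) × ℤ) : Fin (e+1) → ℝ :=
  Fin.snoc (fun j => (ab.1 j : ℝ) / n) ((ab.2 : ℝ) / (n : ℝ) ^ 2)

@[simp] lemma gridPoint_castSucc {e n : ℕ} (ab : (Fin e → ℤ) × ℤ) (j : Fin e) :
    gridPoint n ab j.castSucc = (ab.1 j : ℝ) / n := by
  simp [gridPoint]

@[simp] lemma gridPoint_last {e n : ℕ} (ab : (Fin e → ℤ) × ℤ) :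
    gridPoint n ab (Fin.last e) = (ab.2 : ℝ) / (n : ℝ) ^ 2 := by
  simp [gridPoint]

lemma gridPoint_injective {e n : ℕ} (hn : n ≠ 0) :
    Function.Injective (gridPoint (e := e) n) := by
  rintro ⟨a, b⟩ ⟨a', b'⟩ h
  have hn' : (n : ℝ) ≠ 0 := by exact_mod_cast hn
  refine Prod.ext (funext fun j => ?_) ?_
  · simpa [hn'] using congrFun h j.castSucc
  · simpa [hn'] using congrFun h (Fin.last e)

noncomputable def cube (e m : ℕ) : Finset (Fin e → ℤ) :=
  Fintype.piFinset fun _ => Finset.Ico 0 (m : ℤ)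

lemma mem_cube {e m : ℕ} {a : Fin e → ℤ} : a ∈ cube e m ↔ ∀ j, 0 ≤ a j ∧ a j < m := by
  simp [cube]

lemma card_cube (e m : ℕ) : (cube e m).card = m ^ e := by
  simp [cube]

lemma valtrP_eq (e n : ℕ) :
    valtrP e n = gridPoint n '' ↑(cube e n ×ˢ Finset.Icc 1 ((n : ℤ) ^ 2)) := by
  ext x
  constructor
  · rintro ⟨i, hi, h1, h2, hlast⟩
    refine ⟨(fun j => i j.castSucc, i (Fin.last e)), ?_, funext fun k => ?_⟩
    · simp only [Finset.coe_product, Set.mem_prod, Finset.mem_coe, mem_cube, Finset.mem_Icc]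
      exact ⟨fun j => ⟨(hi j).1, by linarith [(hi j).2.1]⟩, h1, h2⟩
    · induction k using Fin.lastCases with
      | last => simp [hlast]
      | cast j => simp [(hi j).2.2]
  · rintro ⟨⟨a, b⟩, hab, rfl⟩
    simp only [Finset.coe_product, Set.mem_prod, Finset.mem_coe, mem_cube, Finset.mem_Icc] at hab
    refine ⟨Fin.snoc a b, fun j => ?_, ?_⟩ <;> simp <;> grind

lemma valtrGrid_eq (e n : ℕ) :
    valtrGrid e n = gridPoint n '' (↑(cube e n) ×ˢ Set.univ) := by
  ext x
  constructor
  · rintro ⟨i, hi, hlast⟩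
    refine ⟨(fun j => i j.castSucc, i (Fin.last e)), ?_, funext fun k => ?_⟩
    · simp only [Set.mem_prod, Finset.mem_coe, mem_cube, Set.mem_univ, and_true]
      exact fun j => ⟨(hi j).1, by linarith [(hi j).2.1]⟩
    · induction k using Fin.lastCases with
      | last => simp [hlast]
      | cast j => simp [(hi j).2.2]
  · rintro ⟨⟨a, b⟩, hab, rfl⟩
    simp only [Set.mem_prod, Finset.mem_coe, mem_cube] at hab
    refine ⟨Fin.snoc a b, fun j => ?_, by simp⟩
    simpa using ⟨(hab.1 j).1, by linarith [(hab.1 j).2]⟩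

lemma ncard_valtrP (e n : ℕ) (hn : n ≠ 0) : (valtrP e n).ncard = n ^ (e + 2) := by
  rw [valtrP_eq, Set.ncard_image_of_injective _ (gridPoint_injective hn), Set.ncard_coe_finset,
    Finset.card_product, card_cube, Int.card_Icc, add_sub_cancel_right, ← Nat.cast_pow, Int.toNat_natCast, pow_add]

lemma valtrP_finite (e n : ℕ) : (valtrP e n).Finite := by
  rw [valtrP_eq]
  exact (Finset.finite_toSet _).image _

lemma mem_translate_parab_iff {e : ℕ} {p q : Fin (e+1) → ℝ} :
    q ∈ (fun x => x + p) '' parab e ↔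
      q (Fin.last e) - p (Fin.last e) = ∑ j : Fin e, (q j.castSucc - p j.castSucc) ^ 2 := by
  constructor
  · rintro ⟨t, ht, rfl⟩
    simpa [parab] using ht
  · exact fun h => ⟨q - p, by simpa [parab] using h, sub_add_cancel q p⟩

lemma gridPoint_mem_translate_parab_iff {e n : ℕ} (hn : n ≠ 0) (a a' : Fin e → ℤ) (b b' : ℤ) :
    gridPoint n (a, b) ∈ (fun x => x + gridPoint n (a', b')) '' parab e ↔
      b = b' + ∑ j, (a j - a' j) ^ 2 := by
  have hn' : (n : ℝ) ^ 2 ≠ 0 := by positivity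
  have hsum : ∑ j : Fin e, ((a j : ℝ) / n - (a' j : ℝ) / n) ^ 2
      = ((∑ j, (a j - a' j) ^ 2 : ℤ) : ℝ) / (n : ℝ) ^ 2 := by
    push_cast
    rw [Finset.sum_div]
    exact Finset.sum_congr rfl fun j _ => by rw [div_sub_div_same, div_pow]
  rw [mem_translate_parab_iff]
  simp only [gridPoint_castSucc, gridPoint_last]
  rw [hsum, div_sub_div_same, div_left_inj' hn', sub_eq_iff_eq_add']
  exact_mod_cast Iff.rfl

lemma valtrGrid_inter_translate_parab {e n : ℕ} (hn : n ≠ 0) (a' : Fin e → ℤ) (b' : ℤ) :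
    valtrGrid e n ∩ (fun x => x + gridPoint n (a', b')) '' parab e
      = (fun a => gridPoint n (a, b' + ∑ j, (a j - a' j) ^ 2)) '' ↑(cube e n) := by
  ext x
  rw [valtrGrid_eq]
  constructor
  · rintro ⟨⟨⟨a, b⟩, ⟨ha, -⟩, rfl⟩, hx⟩
    rw [gridPoint_mem_translate_parab_iff hn] at hx
    exact ⟨a, ha, by rw [hx]⟩
  · rintro ⟨a, ha, rfl⟩
    exact ⟨⟨_, ⟨ha, Set.mem_univ _⟩, rfl⟩, (gridPoint_mem_translate_parab_iff hn ..).2 rfl⟩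

lemma ncard_valtrGrid_inter_translate_parab {e n : ℕ} (hn : n ≠ 0) (a' : Fin e → ℤ) (b' : ℤ) :
    (valtrGrid e n ∩ (fun x => x + gridPoint n (a', b')) '' parab e).ncard = n ^ e := by
  rw [valtrGrid_inter_translate_parab hn, Set.ncard_image_of_injective, Set.ncard_coe_finset,
    card_cube]
  exact fun a a' h => congrArg Prod.fst (gridPoint_injective hn h)

lemma cube_mono {e m m' : ℕ} (h : m ≤ m') : cube e m ⊆ cube e m' := by
  intro a ha
  rw [mem_cube] at ha ⊢
  exact fun j => ⟨(ha j).1, (ha j).2.trans_le (by exact_mod_cast h)⟩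

lemma sum_sq_sub_le_of_mem_cube {e r : ℕ} {a a' : Fin e → ℤ} (ha : a ∈ cube e (r + 1))
    (ha' : a' ∈ cube e (r + 1)) : ∑ j, (a j - a' j) ^ 2 ≤ e * r ^ 2 := by
  rw [mem_cube] at ha ha'
  calc ∑ j, (a j - a' j) ^ 2 ≤ ∑ _j : Fin e, (r : ℤ) ^ 2 := by
        refine Finset.sum_le_sum fun j _ => sq_le_sq' ?_ ?_ <;>
          push_cast at ha ha' <;> linarith [ha j, ha' j]
    _ = e * r ^ 2 := by simp

lemma le_ncard_incidences {e n r : ℕ} (hn : n ≠ 0) (hr : r < n) (her : e * r ^ 2 ≤ n ^ 2) :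
    (r + 1) ^ e * ((r + 1) ^ e * (n ^ 2 - e * r ^ 2)) ≤
      (((valtrP e n) ×ˢ (valtrP e n)) ∩ {qp | qp.1 ∈ (fun x => x + qp.2) '' parab e}).ncard := by
  set K := n ^ 2 - e * r ^ 2
  have hK : (K : ℤ) + e * r ^ 2 = n ^ 2 := by norm_cast; omega
  let S := cube e (r + 1) ×ˢ cube e (r + 1) ×ˢ Finset.Icc (1 : ℤ) K
  let f : (Fin e → ℤ) × (Fin e → ℤ) × ℤ → (Fin (e+1) → ℝ) × (Fin (e+1) → ℝ) :=
    fun w => (gridPoint n (w.1, w.2.2 + ∑ j, (w.1 j - w.2.1 j) ^ 2), gridPoint n (w.2.1, w.2.2))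
  have hf : Function.Injective f := by
    rintro ⟨a, a', b'⟩ ⟨c, c', d'⟩ h
    obtain ⟨h₁, h₂⟩ := Prod.ext_iff.1 h
    obtain ⟨rfl, rfl⟩ := Prod.ext_iff.1 (gridPoint_injective hn h₂)
    obtain ⟨rfl, -⟩ := Prod.ext_iff.1 (gridPoint_injective hn h₁)
    rfl
  have hsub : f '' ↑S ⊆
      ((valtrP e n) ×ˢ (valtrP e n)) ∩ {qp | qp.1 ∈ (fun x => x + qp.2) '' parab e} := by
    rintro _ ⟨⟨a, a', b'⟩, hw, rfl⟩
    simp only [S, Finset.coe_product, Set.mem_prod, Finset.mem_coe, Finset.mem_Icc] at hw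
    obtain ⟨ha, ha', hb'₁, hb'₂⟩ := hw
    have hsum := sum_sq_sub_le_of_mem_cube ha ha'
    have hsum₀ : 0 ≤ ∑ j, (a j - a' j) ^ 2 := Finset.sum_nonneg fun j _ => sq_nonneg _
    refine ⟨⟨?_, ?_⟩, (gridPoint_mem_translate_parab_iff hn ..).2 rfl⟩ <;>
      rw [valtrP_eq] <;> refine Set.mem_image_of_mem _ ?_ <;>
      simp only [Finset.coe_product, Set.mem_prod, Finset.mem_coe, Finset.mem_Icc]
    · exact ⟨cube_mono hr ha, by linarith, by linarith⟩
    · exact ⟨cube_mono hr ha', hb'₁, by linarith⟩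
  calc (r + 1) ^ e * ((r + 1) ^ e * K) = (f '' ↑S).ncard := by
        rw [Set.ncard_image_of_injective _ hf, Set.ncard_coe_finset, Finset.card_product,
          Finset.card_product, card_cube, Int.card_Icc, add_sub_cancel_right, Int.toNat_natCast]
    _ ≤ _ := Set.ncard_le_ncard hsub
        (((valtrP_finite e n).prod (valtrP_finite e n)).inter_of_left _)

lemma exists_lt_and_four_mul_sq_le_and_le_mul_succ (e : ℕ) {n : ℕ} (hn : n ≠ 0) :
    ∃ r, r < n ∧ 4 * e * r ^ 2 ≤ n ^ 2 ∧ n ≤ (2 * e + 1) * (r + 1) := by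
  refine ⟨(n - 1) / (2 * e + 1), ?_, ?_, ?_⟩
  · exact (Nat.div_le_self _ _).trans_lt (by omega)
  · set r := (n - 1) / (2 * e + 1)
    have h : (2 * e + 1) * r ≤ n := (Nat.mul_div_le (n - 1) (2 * e + 1)).trans (by omega)
    calc 4 * e * r ^ 2 ≤ ((2 * e + 1) * r) ^ 2 := by
          rw [mul_pow]
          exact Nat.mul_le_mul_right _ (by nlinarith)
      _ ≤ n ^ 2 := Nat.pow_le_pow_left h 2
  · have := Nat.lt_mul_div_succ (n - 1) (show 0 < 2 * e + 1 by omega)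
    omega

lemma pow_rpow_two_sub_two_div {x : ℝ} (hx : 0 ≤ x) {k : ℕ} (hk : k ≠ 0) :
    (x ^ k) ^ (2 - 2 / (k : ℝ)) = x ^ (2 * k - 2) := by
  rw [← Real.rpow_natCast x k, ← Real.rpow_mul hx, ← Real.rpow_natCast]
  congr 1
  push_cast [Nat.cast_sub (by omega : 2 ≤ 2 * k)]
  field_simp

lemma mul_pow_le_ncard_incidences (e : ℕ) {n : ℕ} (hn : n ≠ 0) :
    (1 / (2 * e + 1)) ^ (2 * e) * (3 / 4) * (n : ℝ) ^ (2 * e + 2) ≤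
      (((valtrP e n) ×ˢ (valtrP e n)) ∩ {qp | qp.1 ∈ (fun x => x + qp.2) '' parab e}).ncard := by
  obtain ⟨r, hrn, hr, hnr⟩ := exists_lt_and_four_mul_sq_le_and_le_mul_succ e hn
  have hnr' : (n : ℝ) / (2 * e + 1) ≤ r + 1 := by
    rw [div_le_iff₀ (by positivity)]
    exact_mod_cast (by linarith : n ≤ (r + 1) * (2 * e + 1))
  have hK : 3 / 4 * (n : ℝ) ^ 2 ≤ ((n ^ 2 - e * r ^ 2 : ℕ) : ℝ) := by
    rw [Nat.cast_sub (by nlinarith)]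
    have : 4 * (e : ℝ) * r ^ 2 ≤ n ^ 2 := by exact_mod_cast hr
    push_cast
    linarith
  calc (1 / (2 * e + 1)) ^ (2 * e) * (3 / 4) * (n : ℝ) ^ (2 * e + 2)
      = ((n : ℝ) / (2 * e + 1)) ^ (2 * e) * (3 / 4 * (n : ℝ) ^ 2) := by ring
    _ ≤ ((r : ℝ) + 1) ^ (2 * e) * ((n ^ 2 - e * r ^ 2 : ℕ) : ℝ) := by gcongr
    _ = ((r + 1) ^ e * ((r + 1) ^ e * (n ^ 2 - e * r ^ 2)) : ℕ) := by
        push_cast [two_mul, pow_add]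
        ring
    _ ≤ _ := by exact_mod_cast le_ncard_incidences hn hrn (by nlinarith)

theorem stmt6_general (e : ℕ) :
    (∀ n : ℕ, 1 ≤ n →
      (valtrP e n).ncard = n ^ (e+2) ∧
      ∀ p ∈ valtrP e n,
        n ^ e ≤ (valtrGrid e n ∩ (fun x => x + p) '' parab e).ncard) ∧
    (∃ c : ℝ, 0 < c ∧ ∀ n : ℕ, 1 ≤ n →
      c * ((n:ℝ) ^ (e+2)) ^ (2 - 2 / ((e:ℝ) + 2)) ≤
        (((valtrP e n) ×ˢ (valtrP e n)) ∩
          {qp | qp.1 ∈ (fun x => x + qp.2) '' parab e}).ncard) := by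
  refine ⟨fun n hn => ⟨ncard_valtrP e n (by omega), fun p hp => ?_⟩,
    (1 / (2 * e + 1)) ^ (2 * e) * (3 / 4), by positivity, fun n hn => ?_⟩
  · rw [valtrP_eq] at hp
    obtain ⟨⟨a', b'⟩, -, rfl⟩ := hp
    rw [ncard_valtrGrid_inter_translate_parab (by omega)]
  · have hrpow := pow_rpow_two_sub_two_div (Nat.cast_nonneg n) (k := e + 2) (by omega)
    push_cast at hrpow
    rw [hrpow, show 2 * (e + 2) - 2 = 2 * e + 2 by omega]
    exact mul_pow_le_ncard_incidences e (by omega)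

theorem stmt6 (e : ℕ) (he : 1 ≤ e) :
    (∀ n : ℕ, 1 ≤ n →
      (valtrP e n).ncard = n ^ (e+2) ∧
      ∀ p ∈ valtrP e n,
        n ^ e ≤ (valtrGrid e n ∩ (fun x => x + p) '' parab e).ncard) ∧
    (∃ c : ℝ, 0 < c ∧ ∀ n : ℕ, 1 ≤ n →
      c * ((n:ℝ) ^ (e+2)) ^ (2 - 2 / ((e:ℝ) + 2)) ≤
        (((valtrP e n) ×ˢ (valtrP e n)) ∩
          {qp | qp.1 ∈ (fun x => x + qp.2) '' parab e}).ncard) :=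
  stmt6_general e
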